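/- arXiv:0810.4298 — 4 statements merged into one kernel-verified Lean document; each statement's English description precedes it below -/
import Mathlib

section
/- Let x, x_0 ∈ X_d with x_0 in the closure of the orbit A_d·x in X_d. If x_0 is GL, then x is GL. -/
open scoped BigOperators

noncomputable section

/-- `SL_d(ℝ)`. -/
abbrev SLd (d : ℕ) := Matrix.SpecialLinearGroup (Fin d) ℝ

/-- The unimodular lattice `gℤ^d ⊆ ℝ^d`. -/
def latticeOf {d : ℕ} (g : SLd d) : Set (Fin d → ℝ) :=
  Set.range fun m : Fin d → ℤ => (g : Matrix (Fin d) (Fin d) ℝ).mulVec fun i => (m i : ℝ)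

/-- A unimodular lattice in `ℝ^d` is a set of the form `gℤ^d` for some `g ∈ SL_d(ℝ)`. -/
def IsUnimodularLattice {d : ℕ} (x : Set (Fin d → ℝ)) : Prop :=
  ∃ g : SLd d, x = latticeOf g

/-- The grid `x + v`. -/
def grid {d : ℕ} (x : Set (Fin d → ℝ)) (v : Fin d → ℝ) : Set (Fin d → ℝ) :=
  (fun u => u + v) '' x

/-- `N(y) = inf {|∏ i, w i| : w ∈ y}`. -/
def Ngrid {d : ℕ} (y : Set (Fin d → ℝ)) : ℝ :=
  sInf {r : ℝ | ∃ w ∈ y, r = |∏ i, w i|}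

/-- The grid `x + v` is L (Littlewood): `inf {|n|·N(x + nv) : n ∈ ℤ, n ≠ 0} = 0`. -/
def IsL {d : ℕ} (x : Set (Fin d → ℝ)) (v : Fin d → ℝ) : Prop :=
  sInf {r : ℝ | ∃ n : ℤ, n ≠ 0 ∧ r = |(n : ℝ)| * Ngrid (grid x ((n : ℝ) • v))} = 0

/-- The grid `x + v` is FL (L of finite type): `N(x + nv) = 0` for some nonzero integer `n`. -/
def IsFL {d : ℕ} (x : Set (Fin d → ℝ)) (v : Fin d → ℝ) : Prop :=
  ∃ n : ℤ, n ≠ 0 ∧ Ngrid (grid x ((n : ℝ) • v)) = 0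

/-- A lattice `x` is GL if every grid `x + v` is L. -/
def IsGL {d : ℕ} (x : Set (Fin d → ℝ)) : Prop := ∀ v : Fin d → ℝ, IsL x v

/-- A lattice `x` is GFL if every grid `x + v` is FL. -/
def IsGFL {d : ℕ} (x : Set (Fin d → ℝ)) : Prop := ∀ v : Fin d → ℝ, IsFL x v

/-- The topology on `SL_d(ℝ)` induced from the space of matrices. -/
instance (d : ℕ) : TopologicalSpace (SLd d) :=
  TopologicalSpace.induced (fun g : SLd d => (g : Matrix (Fin d) (Fin d) ℝ)) inferInstance

/-- Two elements of `SL_d(ℝ)` are identified iff they span the same lattice. -/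
instance latSetoid (d : ℕ) : Setoid (SLd d) where
  r g h := latticeOf g = latticeOf h
  iseqv := ⟨fun _ => rfl, Eq.symm, Eq.trans⟩

/-- The space `X_d` of unimodular lattices in `ℝ^d`, as the quotient `SL_d(ℝ)/SL_d(ℤ)`
with the quotient topology. -/
def XSp (d : ℕ) := Quotient (latSetoid d)

instance (d : ℕ) : TopologicalSpace (XSp d) := instTopologicalSpaceQuotient

/-- The lattice (a subset of `ℝ^d`) corresponding to a point of `X_d`. -/
def latticeOfX {d : ℕ} : XSp d → Set (Fin d → ℝ) := Quotient.lift latticeOf fun _ _ h => h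

/-- `a ∈ A_d`: a diagonal matrix with positive diagonal entries (and determinant one,
since `a ∈ SL_d(ℝ)`). -/
def IsDiag {d : ℕ} (a : SLd d) : Prop :=
  (∀ i, 0 < (a : Matrix (Fin d) (Fin d) ℝ) i i) ∧
    ∀ i j, i ≠ j → (a : Matrix (Fin d) (Fin d) ℝ) i j = 0

/-- The orbit `A_d · z ⊆ X_d` of a lattice `z ∈ X_d` under the group `A_d` of diagonal
matrices with positive entries and determinant one. -/
def Aorbit {d : ℕ} (z : XSp d) : Set (XSp d) :=
  {w | ∃ a g : SLd d, IsDiag a ∧ z = Quotient.mk (latSetoid d) g ∧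
      w = Quotient.mk (latSetoid d) (a * g)}

/-!
Having some `n ≠ 0` and `w ∈ x` with `|n| · |N(w + n v)| < ε` is an open condition in `(x, v)`
and is unchanged when `v` moves by a vector of `x`; by compactness of the torus `ℝ^d / x₀` it
therefore holds for all `v` at once on a neighbourhood of `x₀`. That neighbourhood meets
`A_d · x`, and the condition is `A_d`-invariant because `N(a w) = N(w)` for `a ∈ A_d`.
-/

open scoped Matrix Topology

lemma Matrix.IsDiag.prod_mulVec {n R : Type*} [Fintype n] [DecidableEq n] [CommRing R]
    {M : Matrix n n R} (hM : M.IsDiag) (w : n → R) :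
    ∏ i, (M *ᵥ w) i = M.det * ∏ i, w i := by
  rw [← hM.diagonal_diag, Matrix.det_diagonal, ← Finset.prod_mul_distrib]
  simp only [Matrix.mulVec_diagonal]

section

variable {d : ℕ}

local notation:1024 "↑ₘ" A:1024 => ((A : SLd d) : Matrix (Fin d) (Fin d) ℝ)

lemma prod_mulVec_of_isDiag {a : SLd d} (ha : IsDiag a) (w : Fin d → ℝ) :
    ∏ i, (↑ₘa *ᵥ w) i = ∏ i, w i := by
  rw [Matrix.IsDiag.prod_mulVec ha.2, a.det_coe, one_mul]

lemma latticeOf_mul (g h : SLd d) : latticeOf (g * h) = (↑ₘg *ᵥ ·) '' latticeOf h := by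
  simp only [latticeOf, ← Set.range_comp, Function.comp_def, Matrix.SpecialLinearGroup.coe_mul,
    Matrix.mulVec_mulVec]

lemma latticeOf_mul_inv_mul {g g' : SLd d} (hgg' : latticeOf g = latticeOf g') (h : SLd d) :
    latticeOf (h * (g'⁻¹ * g)) = latticeOf h := by
  rw [latticeOf_mul, latticeOf_mul, hgg', ← latticeOf_mul, inv_mul_cancel, ← latticeOf_mul,
    mul_one]

lemma latticeOfX_nonempty (z : XSp d) : (latticeOfX z).Nonempty :=
  Quotient.inductionOn z fun g => ⟨0, 0, by
    simp only [Pi.zero_apply, Int.cast_zero]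
    exact Matrix.mulVec_zero _⟩

lemma continuous_mul_const_SLd (γ : SLd d) : Continuous (· * γ : SLd d → SLd d) :=
  continuous_induced_rng.2 <| by
    simpa only [Function.comp_def, Matrix.SpecialLinearGroup.coe_mul] using
      continuous_induced_dom.matrix_mul continuous_const

lemma isOpenMap_quotient_mk_latSetoid : IsOpenMap (Quotient.mk (latSetoid d)) := by
  intro U hU
  refine isQuotientMap_quotient_mk'.isOpen_preimage.1 (isOpen_iff_mem_nhds.2 ?_)
  rintro g ⟨g', hg'U, hg'g⟩
  have hmem : g * (g⁻¹ * g') ∈ U := by rwa [mul_inv_cancel_left]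
  filter_upwards [(continuous_mul_const_SLd (g⁻¹ * g')).continuousAt.preimage_mem_nhds
    (hU.mem_nhds hmem)] with h hh
  exact ⟨h * (g⁻¹ * g'), hh, Quotient.sound (latticeOf_mul_inv_mul (Quotient.exact hg'g) h)⟩

lemma bddBelow_abs_prod (y : Set (Fin d → ℝ)) :
    BddBelow {r : ℝ | ∃ w ∈ y, r = |∏ i, w i|} :=
  ⟨0, by rintro _ ⟨w, -, rfl⟩; exact abs_nonneg _⟩

lemma Ngrid_nonneg (y : Set (Fin d → ℝ)) : 0 ≤ Ngrid y :=
  Real.sInf_nonneg (by rintro _ ⟨w, -, rfl⟩; exact abs_nonneg _)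

lemma Ngrid_le {y : Set (Fin d → ℝ)} {w : Fin d → ℝ} (hw : w ∈ y) :
    Ngrid y ≤ |∏ i, w i| :=
  csInf_le (bddBelow_abs_prod y) ⟨w, hw, rfl⟩

lemma Ngrid_lt_iff {y : Set (Fin d → ℝ)} (hy : y.Nonempty) {r : ℝ} :
    Ngrid y < r ↔ ∃ w ∈ y, |∏ i, w i| < r := by
  obtain ⟨w, hw⟩ := hy
  rw [Ngrid, csInf_lt_iff (bddBelow_abs_prod y) ⟨_, w, hw, rfl⟩]
  constructor
  · rintro ⟨_, ⟨w, hw, rfl⟩, hlt⟩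
    exact ⟨w, hw, hlt⟩
  · rintro ⟨w, hw, hlt⟩
    exact ⟨_, ⟨w, hw, rfl⟩, hlt⟩

def IsLBelow (L : Set (Fin d → ℝ)) (v : Fin d → ℝ) (ε : ℝ) : Prop :=
  ∃ n : ℤ, n ≠ 0 ∧ ∃ w ∈ L, |(n : ℝ)| * |∏ i, (w + (n : ℝ) • v) i| < ε

lemma isL_iff {L : Set (Fin d → ℝ)} (hL : L.Nonempty) (v : Fin d → ℝ) :
    IsL L v ↔ ∀ ε > 0, IsLBelow L v ε := by
  set S := {r : ℝ | ∃ n : ℤ, n ≠ 0 ∧ r = |(n : ℝ)| * Ngrid (grid L ((n : ℝ) • v))}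
  have hS : ∀ r ∈ S, 0 ≤ r := by
    rintro _ ⟨n, -, rfl⟩
    exact mul_nonneg (abs_nonneg _) (Ngrid_nonneg _)
  constructor
  · intro hS0 ε hε
    obtain ⟨_, ⟨n, hn, rfl⟩, hlt⟩ :=
      (csInf_lt_iff ⟨0, hS⟩ ⟨_, 1, one_ne_zero, rfl⟩).1 (hS0.symm ▸ hε : sInf S < ε)
    have hn' : 0 < |(n : ℝ)| := abs_pos.2 (Int.cast_ne_zero.2 hn)
    obtain ⟨_, ⟨w, hw, rfl⟩, hwlt⟩ :=
      (Ngrid_lt_iff (hL.image _)).1 ((lt_div_iff₀' hn').2 hlt)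
    exact ⟨n, hn, w, hw, (lt_div_iff₀' hn').1 hwlt⟩
  · intro h
    refine le_antisymm (le_of_forall_pos_le_add fun ε hε => ?_) (Real.sInf_nonneg hS)
    obtain ⟨n, hn, w, hw, hlt⟩ := h ε hε
    calc sInf S ≤ |(n : ℝ)| * Ngrid (grid L ((n : ℝ) • v)) :=
          csInf_le ⟨0, hS⟩ ⟨n, hn, rfl⟩
      _ ≤ |(n : ℝ)| * |∏ i, (w + (n : ℝ) • v) i| := by
          gcongr
          exact Ngrid_le ⟨w, hw, rfl⟩
      _ ≤ 0 + ε := by linarith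

lemma IsLBelow.of_diag_mul {a g : SLd d} (ha : IsDiag a) {v : Fin d → ℝ} {ε : ℝ}
    (h : IsLBelow (latticeOf (a * g)) (↑ₘa *ᵥ v) ε) : IsLBelow (latticeOf g) v ε := by
  rw [IsLBelow, latticeOf_mul] at h
  obtain ⟨n, hn, _, ⟨u, hu, rfl⟩, hlt⟩ := h
  refine ⟨n, hn, u, hu, ?_⟩
  rwa [← Matrix.mulVec_smul, ← Matrix.mulVec_add, prod_mulVec_of_isDiag ha] at hlt

lemma IsLBelow.add_mulVec_intCast {g : SLd d} {v : Fin d → ℝ} {ε : ℝ}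
    (h : IsLBelow (latticeOf g) v ε) (k : Fin d → ℤ) :
    IsLBelow (latticeOf g) (v + ↑ₘg *ᵥ fun i => (k i : ℝ)) ε := by
  obtain ⟨n, hn, _, ⟨m, rfl⟩, hlt⟩ := h
  refine ⟨n, hn, _, ⟨m - n • k, rfl⟩, ?_⟩
  have hcast : (fun i => ((m - n • k) i : ℝ)) =
      (fun i => (m i : ℝ)) - (n : ℝ) • fun i => (k i : ℝ) := by
    funext i
    simp
  have hw : ↑ₘg *ᵥ (fun i => ((m - n • k) i : ℝ)) + (n : ℝ) • (v + ↑ₘg *ᵥ fun i => (k i : ℝ)) =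
      ↑ₘg *ᵥ (fun i => (m i : ℝ)) + (n : ℝ) • v := by
    rw [hcast, Matrix.mulVec_sub, Matrix.mulVec_smul, smul_add]
    abel
  rwa [hw]

lemma IsLBelow.eventually_nhds {g : SLd d} {t : Fin d → ℝ} {ε : ℝ}
    (h : IsLBelow (latticeOf g) (↑ₘg *ᵥ t) ε) :
    ∀ᶠ q : SLd d × (Fin d → ℝ) in 𝓝 (g, t), IsLBelow (latticeOf q.1) (↑ₘq.1 *ᵥ q.2) ε := by
  obtain ⟨n, hn, _, ⟨m, rfl⟩, hlt⟩ := h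
  have hg : Continuous fun q : SLd d × (Fin d → ℝ) => ↑ₘq.1 :=
    continuous_induced_dom.comp continuous_fst
  have hcont : Continuous fun q : SLd d × (Fin d → ℝ) =>
      |(n : ℝ)| * |∏ i, (↑ₘq.1 *ᵥ (fun i => (m i : ℝ)) + (n : ℝ) • (↑ₘq.1 *ᵥ q.2)) i| := by
    fun_prop
  filter_upwards [hcont.continuousAt.eventually_lt continuousAt_const hlt] with q hq
  exact ⟨n, hn, _, ⟨m, rfl⟩, hq⟩

lemma eventually_forall_isLBelow {g₀ : SLd d} {ε : ℝ}
    (h : ∀ v, IsLBelow (latticeOf g₀) v ε) :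
    ∀ᶠ g in 𝓝 g₀, ∀ v, IsLBelow (latticeOf g) v ε := by
  have hK : ∀ᶠ g in 𝓝 g₀, ∀ t ∈ Set.Icc (0 : Fin d → ℝ) 1,
      IsLBelow (latticeOf g) (↑ₘg *ᵥ t) ε :=
    isCompact_Icc.eventually_forall_of_forall_eventually fun t _ =>
      (h (↑ₘg₀ *ᵥ t)).eventually_nhds
  filter_upwards [hK] with g hg v
  set t := ↑ₘ(g⁻¹) *ᵥ v
  have hv : v = ↑ₘg *ᵥ (fun i => Int.fract (t i)) + ↑ₘg *ᵥ (fun i => (⌊t i⌋ : ℝ)) := by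
    have ht : ((fun i => Int.fract (t i)) + fun i => (⌊t i⌋ : ℝ)) = t :=
      funext fun i => Int.fract_add_floor (t i)
    rw [← Matrix.mulVec_add, ht, Matrix.mulVec_mulVec, ← Matrix.SpecialLinearGroup.coe_mul,
      mul_inv_cancel, Matrix.SpecialLinearGroup.coe_one, Matrix.one_mulVec]
  rw [hv]
  exact (hg _ ⟨fun i => Int.fract_nonneg _, fun i => (Int.fract_lt_one _).le⟩)
    |>.add_mulVec_intCast _

end

theorem stmt_7_general (d : ℕ) (x x0 : XSp d)
    (h : x0 ∈ closure (Aorbit x)) (h0 : IsGL (latticeOfX x0)) :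
    IsGL (latticeOfX x) := by
  obtain ⟨g₀, rfl⟩ := Quotient.exists_rep x0
  intro v
  rw [isL_iff (latticeOfX_nonempty x)]
  intro ε hε
  have hW : ∀ᶠ g in 𝓝 g₀, ∀ w, IsLBelow (latticeOf g) w ε :=
    eventually_forall_isLBelow fun w => (isL_iff (latticeOfX_nonempty _) w).1 (h0 w) ε hε
  obtain ⟨_, ⟨g, hgW, rfl⟩, a, g₁, ha, rfl, hag⟩ :=
    mem_closure_iff_nhds.1 h _ (isOpenMap_quotient_mk_latSetoid.image_mem_nhds hW)
  have hlat : latticeOf g = latticeOf (a * g₁) := Quotient.exact hag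
  exact (hlat ▸ hgW ((a : Matrix (Fin d) (Fin d) ℝ) *ᵥ v)).of_diag_mul ha

/-- Inheritance: if `x₀` lies in the closure of the orbit `A_d · x` in `X_d` and `x₀` is GL,
then `x` is GL. -/
theorem stmt_7 (d : ℕ) (hd : 2 ≤ d) (x x0 : XSp d)
    (h : x0 ∈ closure (Aorbit x)) (h0 : IsGL (latticeOfX x0)) :
    IsGL (latticeOfX x) :=
  stmt_7_general d x x0 h h0
end
end

section
/- For every grid y in ℝ^d, inf{|n|·N(ny) : n ∈ ℤ, n ≠ 0} = inf{|∏_{i=1}^{d+1} w_i| : w = (w_1,…,w_{d+1}) ∈ τ_y, w_{d+1} ≠ 0}. -/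
open scoped BigOperators

noncomputable section

/-- For the grid `y = x + v`, `τ_y = {(u + tv, t) : u ∈ x, t ∈ ℤ} ⊆ ℝ^{d+1}`. -/
def tauSet {d : ℕ} (x : Set (Fin d → ℝ)) (v : Fin d → ℝ) : Set (Fin (d + 1) → ℝ) :=
  {w | ∃ u ∈ x, ∃ t : ℤ,
    (∀ i : Fin d, w i.castSucc = u i + (t : ℝ) * v i) ∧ w (Fin.last d) = (t : ℝ)}

/-! The points of `τ_y` with last coordinate `t` are exactly the `(w, t)` with `w ∈ ty`, and
for them `|∏ wᵢ| = |t| · |N(w)|`. So both sides are infima of the same numbers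
`|t| · |N(w)|`, taken grid by grid on the left and all at once on the right. -/

theorem sInf_mul_sInf_eq_sInf {ι : Type*} {P : ι → Prop} (hP : ∃ i, P i) {c : ι → ℝ}
    (hc : ∀ i, 0 ≤ c i) {S : ι → Set ℝ} (hne : ∀ i, (S i).Nonempty) (hS : ∀ i, ∀ s ∈ S i, 0 ≤ s) :
    sInf {r | ∃ i, P i ∧ r = c i * sInf (S i)} = sInf {r | ∃ i, P i ∧ ∃ s ∈ S i, r = c i * s} := by
  obtain ⟨i₀, hi₀⟩ := hP
  obtain ⟨s₀, hs₀⟩ := hne i₀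
  have hbdd : BddBelow {r | ∃ i, P i ∧ ∃ s ∈ S i, r = c i * s} := by
    refine ⟨0, ?_⟩
    rintro r ⟨i, -, s, hs, rfl⟩
    exact mul_nonneg (hc i) (hS i s hs)
  apply le_antisymm
  · refine le_csInf ⟨_, i₀, hi₀, s₀, hs₀, rfl⟩ ?_
    rintro r ⟨i, hi, s, hs, rfl⟩
    calc sInf {r | ∃ i, P i ∧ r = c i * sInf (S i)}
        ≤ c i * sInf (S i) := csInf_le ⟨0, ?_⟩ ⟨i, hi, rfl⟩
      _ ≤ c i * s := mul_le_mul_of_nonneg_left (csInf_le ⟨0, hS i⟩ hs) (hc i)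
    rintro r ⟨j, -, rfl⟩
    exact mul_nonneg (hc j) (Real.sInf_nonneg (hS j))
  · refine le_csInf ⟨_, i₀, hi₀, rfl⟩ ?_
    rintro r ⟨i, hi, rfl⟩
    rw [← smul_eq_mul, ← Real.sInf_smul_of_nonneg (hc i)]
    refine le_csInf ((hne i).smul_set) ?_
    rintro r ⟨s, hs, rfl⟩
    exact csInf_le hbdd ⟨i, hi, s, hs, rfl⟩

theorem mem_tauSet_iff {d : ℕ} {x : Set (Fin d → ℝ)} {v : Fin d → ℝ} {w : Fin (d + 1) → ℝ} :
    w ∈ tauSet x v ↔ ∃ t : ℤ, Fin.init w ∈ grid x ((t : ℝ) • v) ∧ w (Fin.last d) = t := by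
  constructor
  · rintro ⟨u, hu, t, hinit, hlast⟩
    exact ⟨t, ⟨u, hu, funext fun i => by simp [Fin.init, hinit i]⟩, hlast⟩
  · rintro ⟨t, ⟨u, hu, hinit⟩, hlast⟩
    refine ⟨u, hu, t, fun i => ?_, hlast⟩
    simpa [Fin.init] using (congrFun hinit i).symm

theorem prod_eq_prod_init_mul_last {M : Type*} [CommMonoid M] {d : ℕ} (w : Fin (d + 1) → M) :
    ∏ i, w i = (∏ i, Fin.init w i) * w (Fin.last d) :=
  Fin.prod_univ_castSucc w

theorem zero_mem_latticeOf {d : ℕ} (g : SLd d) : (0 : Fin d → ℝ) ∈ latticeOf g :=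
  ⟨0, by simp only [Pi.zero_apply, Int.cast_zero]; exact Matrix.mulVec_zero _⟩

theorem setOf_abs_prod_tauSet_eq {d : ℕ} (x : Set (Fin d → ℝ)) (v : Fin d → ℝ) :
    {r : ℝ | ∃ w ∈ tauSet x v, w (Fin.last d) ≠ 0 ∧ r = |∏ i, w i|} =
      {r | ∃ n : ℤ, n ≠ 0 ∧
        ∃ s ∈ {r | ∃ w ∈ grid x ((n : ℝ) • v), r = |∏ i, w i|}, r = |(n : ℝ)| * s} := by
  ext r
  constructor
  · rintro ⟨w, hw, hlast, rfl⟩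
    obtain ⟨t, hinit, ht⟩ := mem_tauSet_iff.1 hw
    refine ⟨t, by rintro rfl; simp_all, _, ⟨_, hinit, rfl⟩, ?_⟩
    rw [prod_eq_prod_init_mul_last, abs_mul, ht, mul_comm]
  · rintro ⟨n, hn, _, ⟨y, hy, rfl⟩, rfl⟩
    refine ⟨Fin.snoc y n, mem_tauSet_iff.2 ⟨n, by simpa using hy, by simp⟩, by simpa using hn, ?_⟩
    rw [prod_eq_prod_init_mul_last, abs_mul]
    simp [mul_comm]

theorem stmt_9_general (d : ℕ) (g : SLd d) (v : Fin d → ℝ) :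
    sInf {r : ℝ | ∃ n : ℤ, n ≠ 0 ∧ r = |(n : ℝ)| * Ngrid (grid (latticeOf g) ((n : ℝ) • v))}
      = sInf {r : ℝ | ∃ w ∈ tauSet (latticeOf g) v, w (Fin.last d) ≠ 0 ∧ r = |∏ i, w i|} := by
  have hne (n : ℤ) : {r | ∃ w ∈ grid (latticeOf g) ((n : ℝ) • v), r = |∏ i, w i|}.Nonempty :=
    ⟨_, _, ⟨0, zero_mem_latticeOf g, rfl⟩, rfl⟩
  rw [setOf_abs_prod_tauSet_eq]
  refine sInf_mul_sInf_eq_sInf ⟨1, one_ne_zero⟩ (fun _ => abs_nonneg _) hne ?_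
  rintro n s ⟨w, -, rfl⟩
  exact abs_nonneg _

/-- For every grid `y = x + v` in `ℝ^d`,
`inf {|n|·N(ny) : n ∈ ℤ, n ≠ 0} = inf {|∏ w_i| : w ∈ τ_y, w_{d+1} ≠ 0}`. -/
theorem stmt_9 (d : ℕ) (hd : 2 ≤ d) (g : SLd d) (v : Fin d → ℝ) :
    sInf {r : ℝ | ∃ n : ℤ, n ≠ 0 ∧ r = |(n : ℝ)| * Ngrid (grid (latticeOf g) ((n : ℝ) • v))}
      = sInf {r : ℝ | ∃ w ∈ tauSet (latticeOf g) v, w (Fin.last d) ≠ 0 ∧ r = |∏ i, w i|} :=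
  stmt_9_general d g v

end
end

section
/- Let d_1 ≥ 2 and d_2 ≥ 1, let x_1 ⊆ ℝ^{d_1} be a GFL unimodular lattice and let x_2 ⊆ ℝ^{d_2} be any unimodular lattice. Then the direct sum x_1 ⊕ x_2 = {(u, w) : u ∈ x_1, w ∈ x_2} is a GFL unimodular lattice in ℝ^{d_1 + d_2}. -/
open scoped BigOperators

noncomputable section

/-- The direct sum `x₁ ⊕ x₂ = {(u, w) : u ∈ x₁, w ∈ x₂} ⊆ ℝ^{d₁ + d₂}`. -/
def dsum {d1 d2 : ℕ} (x1 : Set (Fin d1 → ℝ)) (x2 : Set (Fin d2 → ℝ)) :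
    Set (Fin (d1 + d2) → ℝ) :=
  {w | ∃ u ∈ x1, ∃ z ∈ x2, w = Fin.append u z}

/-! The grid `x₁ ⊕ x₂ + (v₁, v₂)` contains `(w, z)` for all `w ∈ x₁ + v₁`, `z ∈ x₂ + v₂`, and
`|N(w, z)| = |N(w)| · |N(z)|`. Fixing one `z` and letting `w` run through points with `|N(w)|`
arbitrarily small shows that `N(x₁ ⊕ x₂ + n v) = 0` whenever `N(x₁ + n v₁) = 0`. The lattice
`x₁ ⊕ x₂` is unimodular because it is the image of `ℤ^{d₁ + d₂}` under `diag(g₁, g₂)`. -/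

namespace Fin

variable {m n : ℕ}

theorem comp_append {α β : Type*} (f : α → β) (a : Fin m → α) (b : Fin n → α) :
    f ∘ append a b = append (f ∘ a) (f ∘ b) := by
  funext i
  refine addCases (fun i => ?_) (fun j => ?_) i <;> simp

theorem append_add_append {α : Type*} [Add α] (a c : Fin m → α) (b d : Fin n → α) :
    append a b + append c d = append (a + c) (b + d) := by
  funext i
  refine addCases (fun i => ?_) (fun j => ?_) i <;> simp

theorem smul_append {M α : Type*} [SMul M α] (r : M) (a : Fin m → α) (b : Fin n → α) :
    r • append a b = append (r • a) (r • b) := by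
  funext i
  refine addCases (fun i => ?_) (fun j => ?_) i <;> simp

theorem prod_append {M : Type*} [CommMonoid M] (a : Fin m → M) (b : Fin n → M) :
    ∏ i, append a b i = (∏ i, a i) * ∏ j, b j := by
  simp [prod_univ_add]

end Fin

section BlockDiagonal

variable {d1 d2 : ℕ}

def SLd.blockDiag (g1 : SLd d1) (g2 : SLd d2) : SLd (d1 + d2) :=
  ⟨Matrix.reindex finSumFinEquiv finSumFinEquiv
      (Matrix.fromBlocks (g1 : Matrix (Fin d1) (Fin d1) ℝ) 0 0 (g2 : Matrix (Fin d2) (Fin d2) ℝ)),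
    by rw [Matrix.det_reindex_self, Matrix.det_fromBlocks_zero₂₁, g1.det_coe, g2.det_coe, one_mul]⟩

theorem SLd.blockDiag_mulVec_append (g1 : SLd d1) (g2 : SLd d2) (a : Fin d1 → ℝ)
    (b : Fin d2 → ℝ) :
    (SLd.blockDiag g1 g2 : Matrix (Fin (d1 + d2)) (Fin (d1 + d2)) ℝ).mulVec (Fin.append a b) =
      Fin.append ((g1 : Matrix (Fin d1) (Fin d1) ℝ).mulVec a)
        ((g2 : Matrix (Fin d2) (Fin d2) ℝ).mulVec b) := by
  funext i
  refine Fin.addCases (fun i => ?_) (fun j => ?_) i <;>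
    simp [SLd.blockDiag, Matrix.reindex_apply, Matrix.submatrix_mulVec_equiv,
      Matrix.fromBlocks_mulVec, Function.comp_def]

theorem latticeOf_blockDiag (g1 : SLd d1) (g2 : SLd d2) :
    latticeOf (SLd.blockDiag g1 g2) = dsum (latticeOf g1) (latticeOf g2) := by
  ext w
  constructor
  · rintro ⟨m, rfl⟩
    refine ⟨_, ⟨fun i => m (Fin.castAdd d2 i), rfl⟩, _, ⟨fun j => m (Fin.natAdd d1 j), rfl⟩, ?_⟩
    rw [← SLd.blockDiag_mulVec_append]
    exact congrArg _ (Fin.append_castAdd_natAdd (f := fun i => (m i : ℝ))).symm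
  · rintro ⟨u, ⟨m1, rfl⟩, z, ⟨m2, rfl⟩, rfl⟩
    refine ⟨Fin.append m1 m2, ?_⟩
    rw [← SLd.blockDiag_mulVec_append]
    exact congrArg _ (Fin.comp_append Int.cast m1 m2)

end BlockDiagonal

theorem IsUnimodularLattice.nonempty {d : ℕ} {x : Set (Fin d → ℝ)} (hx : IsUnimodularLattice x) :
    x.Nonempty := by
  obtain ⟨g, rfl⟩ := hx
  exact ⟨_, 0, rfl⟩

theorem IsUnimodularLattice.dsum {d1 d2 : ℕ} {x1 : Set (Fin d1 → ℝ)} {x2 : Set (Fin d2 → ℝ)}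
    (hx1 : IsUnimodularLattice x1) (hx2 : IsUnimodularLattice x2) :
    IsUnimodularLattice (dsum x1 x2) := by
  obtain ⟨g1, rfl⟩ := hx1
  obtain ⟨g2, rfl⟩ := hx2
  exact ⟨SLd.blockDiag g1 g2, (latticeOf_blockDiag g1 g2).symm⟩

theorem Ngrid_eq_zero_iff {d : ℕ} {y : Set (Fin d → ℝ)} (hy : y.Nonempty) :
    Ngrid y = 0 ↔ ∀ ε > 0, ∃ w ∈ y, |∏ i, w i| < ε := by
  obtain ⟨w₀, hw₀⟩ := hy
  have hbdd : BddBelow {r : ℝ | ∃ w ∈ y, r = |∏ i, w i|} := ⟨0, by rintro _ ⟨w, -, rfl⟩; positivity⟩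
  have hne : {r : ℝ | ∃ w ∈ y, r = |∏ i, w i|}.Nonempty := ⟨_, w₀, hw₀, rfl⟩
  have hnonneg : 0 ≤ Ngrid y := Real.sInf_nonneg (by rintro _ ⟨w, -, rfl⟩; positivity)
  rw [← hnonneg.ge_iff_eq', Ngrid, Real.sInf_le_iff hbdd hne]
  simp only [zero_add, Set.mem_ofPred_eq]
  constructor
  · intro h ε hε
    obtain ⟨_, ⟨w, hw, rfl⟩, hlt⟩ := h ε hε
    exact ⟨w, hw, hlt⟩
  · intro h ε hε
    obtain ⟨w, hw, hlt⟩ := h ε hε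
    exact ⟨_, ⟨w, hw, rfl⟩, hlt⟩

theorem append_mem_grid_dsum {d1 d2 : ℕ} {x1 : Set (Fin d1 → ℝ)} {x2 : Set (Fin d2 → ℝ)}
    {v1 w1 : Fin d1 → ℝ} {v2 w2 : Fin d2 → ℝ} (hw1 : w1 ∈ grid x1 v1) (hw2 : w2 ∈ grid x2 v2) :
    Fin.append w1 w2 ∈ grid (dsum x1 x2) (Fin.append v1 v2) := by
  obtain ⟨u, hu, rfl⟩ := hw1
  obtain ⟨z, hz, rfl⟩ := hw2
  exact ⟨Fin.append u z, ⟨u, hu, z, hz, rfl⟩, Fin.append_add_append _ _ _ _⟩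

theorem Ngrid_eq_zero_of_append_mem {d1 d2 : ℕ} {y1 : Set (Fin d1 → ℝ)}
    {y : Set (Fin (d1 + d2) → ℝ)} (z : Fin d2 → ℝ) (hy1 : y1.Nonempty) (h1 : Ngrid y1 = 0)
    (hmem : ∀ w ∈ y1, Fin.append w z ∈ y) : Ngrid y = 0 := by
  have hy : y.Nonempty := (hy1.image _).mono (Set.image_subset_iff.2 hmem)
  rw [Ngrid_eq_zero_iff hy]
  intro ε hε
  set C := |∏ j, z j|
  obtain ⟨w, hw, hlt⟩ := (Ngrid_eq_zero_iff hy1).1 h1 (ε / (C + 1)) (by positivity)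
  refine ⟨Fin.append w z, hmem w hw, ?_⟩
  rw [Fin.prod_append, abs_mul]
  calc |∏ i, w i| * C ≤ |∏ i, w i| * (C + 1) := by gcongr; linarith
    _ < ε := (lt_div_iff₀ (by positivity)).1 hlt

theorem IsGFL.dsum {d1 d2 : ℕ} {x1 : Set (Fin d1 → ℝ)} {x2 : Set (Fin d2 → ℝ)} (h : IsGFL x1)
    (hx1 : x1.Nonempty) (hx2 : x2.Nonempty) : IsGFL (dsum x1 x2) := by
  intro v
  rw [← Fin.append_castAdd_natAdd (f := v)]
  obtain ⟨n, hn, hN⟩ := h fun i => v (Fin.castAdd d2 i)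
  refine ⟨n, hn, ?_⟩
  obtain ⟨z, hz⟩ := hx2.image fun u => u + (n : ℝ) • fun j => v (Fin.natAdd d1 j)
  rw [Fin.smul_append]
  exact Ngrid_eq_zero_of_append_mem z (hx1.image _) hN fun w hw => append_mem_grid_dsum hw hz

theorem stmt_10_general (d1 d2 : ℕ)
    (x1 : Set (Fin d1 → ℝ)) (x2 : Set (Fin d2 → ℝ))
    (hx1 : IsUnimodularLattice x1) (hx2 : IsUnimodularLattice x2)
    (h : IsGFL x1) :
    IsUnimodularLattice (dsum x1 x2) ∧ IsGFL (dsum x1 x2) :=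
  ⟨hx1.dsum hx2, h.dsum hx1.nonempty hx2.nonempty⟩

/-- If `x₁ ⊆ ℝ^{d₁}` is a GFL unimodular lattice and `x₂ ⊆ ℝ^{d₂}` is any unimodular
lattice, then `x₁ ⊕ x₂` is a GFL unimodular lattice in `ℝ^{d₁ + d₂}`. -/
theorem stmt_10 (d1 d2 : ℕ) (hd1 : 2 ≤ d1) (hd2 : 1 ≤ d2)
    (x1 : Set (Fin d1 → ℝ)) (x2 : Set (Fin d2 → ℝ))
    (hx1 : IsUnimodularLattice x1) (hx2 : IsUnimodularLattice x2)
    (h : IsGFL x1) :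
    IsUnimodularLattice (dsum x1 x2) ∧ IsGFL (dsum x1 x2) :=
  stmt_10_general d1 d2 x1 x2 hx1 hx2 h

end
end

section
/- Let K be a totally real number field of degree d ≥ 2. Then there exists a unit α ∈ O_K^× such that for every positive integer n, ℚ(α^n) = K; equivalently, the minimal polynomial of α^n over ℚ has degree d for every n ≥ 1. -/
/-!
Modulo torsion, the units of `K` form a lattice `ℤ^r` inside `ℚ^r`, `r = [K : ℚ] - 1`. For a
proper subfield `F`, the units of `K` lying in `F` are the units of `F`, so their coordinates
span a subspace of dimension at most `[F : ℚ] - 1 < r`: here total reality is essential. A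
vector space over `ℚ` is not a finite union of proper subspaces, and clearing denominators gives a
unit `α` whose coordinates avoid the subspace of each of the finitely many proper subfields. The
coordinates of `α ^ n` are `n` times those of `α`, so no `α ^ n` with `n > 0` lies in a proper
subfield.
-/

open NumberField NumberField.Units NumberField.InfinitePlace
open scoped IntermediateField

theorem IntermediateField.finrank_lt_of_ne_top {k L : Type*} [Field k] [Field L] [Algebra k L]
    [FiniteDimensional k L] {F : IntermediateField k L} (hF : F ≠ ⊤) :
    Module.finrank k F < Module.finrank k L :=
  lt_of_not_ge fun h => hF <| eq_of_le_of_finrank_le le_top (by rwa [finrank_top'])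

theorem Submodule.exists_intCast_forall_notMem_of_forall_ne_top {ι κ : Type*} [Finite ι]
    [Finite κ] (p : ι → Submodule ℚ (κ → ℚ)) (hp : ∀ i, p i ≠ ⊤) :
    ∃ c : κ → ℤ, ∀ i, (fun k => (c k : ℚ)) ∉ p i := by
  obtain ⟨x, hx⟩ := exists_forall_notMem_of_forall_ne_top p hp
  obtain ⟨b, hb⟩ := IsLocalization.exist_integer_multiples_of_finite (nonZeroDivisors ℤ) x
  choose c hc using hb
  have hb₀ : ((b : ℤ) : ℚ) ≠ 0 := Int.cast_ne_zero.mpr (nonZeroDivisors.coe_ne_zero b)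
  refine ⟨c, fun i hi => hx i ((smul_mem_iff (p i) hb₀).mp ?_)⟩
  convert hi using 1
  funext k
  rw [← eq_intCast (algebraMap ℤ ℚ) (c k), hc k, Pi.smul_apply, smul_eq_mul, zsmul_eq_mul]

namespace NumberField

theorem isTotallyReal_of_forall_im_eq_zero {K : Type*} [Field K]
    (h : ∀ ψ : K →+* ℂ, ∀ θ : K, (ψ θ).im = 0) : IsTotallyReal K where
  isReal _ := isReal_iff.mpr <| ComplexEmbedding.isReal_iff.mpr <|
    RingHom.ext fun θ => Complex.conj_eq_iff_im.mpr (h _ θ)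

variable {K : Type*} [Field K] [NumberField K]

variable (K) in
theorem IsTotallyReal.units_rank_eq [IsTotallyReal K] :
    rank K = Module.finrank ℚ K - 1 := by
  rw [rank, card_eq_nrRealPlaces_add_nrComplexPlaces, IsTotallyReal.nrComplexPlaces_eq_zero,
    add_zero, IsTotallyReal.finrank]

theorem IsTotallyReal.units_rank_lt_of_ne_top [IsTotallyReal K] {F : IntermediateField ℚ K}
    (hF : F ≠ ⊤) : rank F < rank K := by
  have hpos : 0 < Module.finrank ℚ F := Module.finrank_pos
  have hlt := IntermediateField.finrank_lt_of_ne_top hF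
  rw [units_rank_eq, units_rank_eq]
  omega

namespace Units

-- Instance search does not get through the `Additive` and quotient layers on its own.
instance : Module ℤ (Additive ((𝓞 K)ˣ ⧸ torsion K)) :=
  AddCommGroup.toIntModule (Additive ((𝓞 K)ˣ ⧸ torsion K))

variable (K) in
noncomputable def ratCoords : Additive (𝓞 K)ˣ →+ (Fin (rank K) → ℚ) :=
  (AddMonoidHom.compLeft (Int.castAddHom ℚ) _).comp
    ((basisModTorsion K).equivFun.toLinearMap.toAddMonoidHom.comp
      (QuotientGroup.mk' (torsion K)).toAdditive)

theorem ratCoords_eq_zero_of_mem_torsion {ζ : (𝓞 K)ˣ} (hζ : ζ ∈ torsion K) :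
    ratCoords K (.ofMul ζ) = 0 := by
  have : (ζ : (𝓞 K)ˣ ⧸ torsion K) = 1 := (QuotientGroup.eq_one_iff ζ).mpr hζ
  simp [ratCoords, this]

theorem exists_ratCoords_eq_intCast (c : Fin (rank K) → ℤ) :
    ∃ u : (𝓞 K)ˣ, ratCoords K (.ofMul u) = fun i => (c i : ℚ) := by
  obtain ⟨u, hu⟩ := QuotientGroup.mk'_surjective (torsion K)
    ((basisModTorsion K).equivFun.symm c).toMul
  refine ⟨u, ?_⟩
  change (fun i => ((basisModTorsion K).equivFun (.ofMul (QuotientGroup.mk' _ u)) i : ℚ)) = _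
  rw [hu, ofMul_toMul, LinearEquiv.apply_symm_apply]

theorem exists_forall_ratCoords_notMem {ι : Type*} [Finite ι]
    (p : ι → Submodule ℚ (Fin (rank K) → ℚ)) (hp : ∀ i, p i ≠ ⊤) :
    ∃ u : (𝓞 K)ˣ, ∀ i, ratCoords K (.ofMul u) ∉ p i := by
  obtain ⟨c, hc⟩ := Submodule.exists_intCast_forall_notMem_of_forall_ne_top p hp
  obtain ⟨u, hu⟩ := exists_ratCoords_eq_intCast c
  exact ⟨u, hu ▸ hc⟩

theorem ratCoords_map_mem_span {L : Type*} [Field L] [NumberField L] (j : (𝓞 L)ˣ →* (𝓞 K)ˣ)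
    (v : (𝓞 L)ˣ) : ratCoords K (.ofMul (j v)) ∈
      Submodule.span ℚ (Set.range fun i => ratCoords K (.ofMul (j (fundSystem L i)))) := by
  obtain ⟨⟨ζ, e⟩, rfl, -⟩ := exist_unique_eq_mul_prod L v
  have hζ : j ζ ∈ torsion K := (CommGroup.mem_torsion _).mpr (j.isOfFinOrder ζ.2)
  simp only [map_mul, map_prod, map_zpow, ofMul_mul, ofMul_prod, ofMul_zpow, map_add, map_sum,
    map_zsmul, ratCoords_eq_zero_of_mem_torsion hζ, zero_add]
  exact Submodule.sum_mem _ fun i _ =>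
    Submodule.smul_of_tower_mem _ _ (Submodule.subset_span ⟨i, rfl⟩)

theorem exists_units_map_eq_of_coe_mem {F : IntermediateField ℚ K} (u : (𝓞 K)ˣ)
    (hu : ((u : 𝓞 K) : K) ∈ F) :
    ∃ v : (𝓞 F)ˣ, Units.map (algebraMap (𝓞 F) (𝓞 K)).toMonoidHom v = u := by
  have hint : IsIntegral ℤ (⟨_, hu⟩ : F) :=
    (isIntegral_algebraMap_iff (FaithfulSMul.algebraMap_injective F K)).mp u.1.isIntegral_coe
  set y : 𝓞 F := ⟨⟨_, hu⟩, hint⟩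
  have hy : algebraMap (𝓞 F) (𝓞 K) y = u := RingOfIntegers.ext rfl
  have : IsUnit y := IsUnit.of_map (algebraMap (𝓞 F) (𝓞 K)) y (hy ▸ u.isUnit)
  exact ⟨this.unit, Units.ext hy⟩

variable (K) in
noncomputable def unitsSpan (F : IntermediateField ℚ K) : Submodule ℚ (Fin (rank K) → ℚ) :=
  Submodule.span ℚ {x | ∃ u : (𝓞 K)ˣ, ((u : 𝓞 K) : K) ∈ F ∧ ratCoords K (.ofMul u) = x}

theorem ratCoords_mem_unitsSpan {F : IntermediateField ℚ K} {u : (𝓞 K)ˣ}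
    (hu : ((u : 𝓞 K) : K) ∈ F) : ratCoords K (.ofMul u) ∈ unitsSpan K F :=
  Submodule.subset_span ⟨u, hu, rfl⟩

theorem finrank_unitsSpan_le (F : IntermediateField ℚ K) :
    Module.finrank ℚ (unitsSpan K F) ≤ rank F := by
  set j := Units.map (algebraMap (𝓞 F) (𝓞 K)).toMonoidHom
  have hle : unitsSpan K F ≤
      Submodule.span ℚ (Set.range fun i => ratCoords K (.ofMul (j (fundSystem F i)))) := by
    refine Submodule.span_le.mpr ?_
    rintro _ ⟨u, hu, rfl⟩
    obtain ⟨v, rfl⟩ := exists_units_map_eq_of_coe_mem u hu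
    exact ratCoords_map_mem_span j v
  calc Module.finrank ℚ (unitsSpan K F) ≤ _ := Submodule.finrank_mono hle
    _ ≤ Fintype.card (Fin (rank F)) := finrank_range_le_card _
    _ = rank F := Fintype.card_fin _

end Units

theorem IsTotallyReal.unitsSpan_ne_top [IsTotallyReal K] {F : IntermediateField ℚ K}
    (hF : F ≠ ⊤) : unitsSpan K F ≠ ⊤ := by
  intro h
  have := finrank_unitsSpan_le F
  rw [h, finrank_top, Module.finrank_fin_fun] at this
  exact (units_rank_lt_of_ne_top hF).not_ge this

theorem IsTotallyReal.exists_unit_adjoin_pow_eq_top [IsTotallyReal K] :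
    ∃ α : (𝓞 K)ˣ, ∀ n : ℕ, 0 < n → ℚ⟮((α : 𝓞 K) : K) ^ n⟯ = ⊤ := by
  have : Finite (IntermediateField ℚ K) :=
    Field.finite_intermediateField_of_exists_primitive_element ℚ K
      (Field.exists_primitive_element ℚ K)
  obtain ⟨α, hα⟩ := exists_forall_ratCoords_notMem
    (fun F : {F : IntermediateField ℚ K // F ≠ ⊤} => unitsSpan K F) fun F => unitsSpan_ne_top F.2
  refine ⟨α, fun n hn => by_contra fun hne => hα ⟨_, hne⟩ ?_⟩
  have hmem : (((α ^ n : (𝓞 K)ˣ) : 𝓞 K) : K) ∈ ℚ⟮((α : 𝓞 K) : K) ^ n⟯ := by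
    simpa using IntermediateField.mem_adjoin_simple_self ℚ (((α : 𝓞 K) : K) ^ n)
  have hpow := ratCoords_mem_unitsSpan hmem
  rw [ofMul_pow, map_nsmul, ← Nat.cast_smul_eq_nsmul ℚ] at hpow
  exact (Submodule.smul_mem_iff _ (Nat.cast_ne_zero.mpr hn.ne')).mp hpow

end NumberField

theorem stmt_18_general (K : Type*) [Field K] [NumberField K] (d : ℕ)
    (hdeg : Module.finrank ℚ K = d)
    (htotreal : ∀ ψ : K →+* ℂ, ∀ θ : K, (ψ θ).im = 0) :
    ∃ α : (NumberField.RingOfIntegers K)ˣ, ∀ n : ℕ, 0 < n →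
      IntermediateField.adjoin ℚ {((α : NumberField.RingOfIntegers K) : K) ^ n} = ⊤ ∧
      (minpoly ℚ (((α : NumberField.RingOfIntegers K) : K) ^ n)).natDegree = d := by
  have := isTotallyReal_of_forall_im_eq_zero htotreal
  obtain ⟨α, hα⟩ := IsTotallyReal.exists_unit_adjoin_pow_eq_top (K := K)
  refine ⟨α, fun n hn => ⟨hα n hn, ?_⟩⟩
  rw [← IntermediateField.adjoin.finrank (IsIntegral.of_finite ℚ _), hα n hn,
    IntermediateField.finrank_top', hdeg]

/-- In a totally real number field `K` of degree `d ≥ 2` there is a unit `α ∈ O_K^×` such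
that for every positive integer `n`, `ℚ(α^n) = K`; equivalently the minimal polynomial of
`α^n` over `ℚ` has degree `d` for every `n ≥ 1`. -/
theorem stmt_18 (K : Type*) [Field K] [NumberField K] (d : ℕ) (hd : 2 ≤ d)
    (hdeg : Module.finrank ℚ K = d)
    (htotreal : ∀ ψ : K →+* ℂ, ∀ θ : K, (ψ θ).im = 0) :
    ∃ α : (NumberField.RingOfIntegers K)ˣ, ∀ n : ℕ, 0 < n →
      IntermediateField.adjoin ℚ {((α : NumberField.RingOfIntegers K) : K) ^ n} = ⊤ ∧
      (minpoly ℚ (((α : NumberField.RingOfIntegers K) : K) ^ n)).natDegree = d :=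
  stmt_18_general K d hdeg htotreal
end
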